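/- For r ≥ 5 and 3 ≤ k ≤ r−2, adim_k(K_r □ K_r) = r−k; for k = r−1, adim_{r−1}(K_r □ K_r) = r; and for r ≤ k ≤ 2r−3 there is no k-ARS in K_r □ K_r (adim_k = +∞). In particular, any set X of t vertices contained in a single column V(K_r) × {v_j} with 2 ≤ t ≤ r−1 is an (r−t)-ARS. -/

import Mathlib

/-!
`K_n □ K_n` has diameter two, so two vertices outside `S` have the same distances to `S` exactly
when they share a row or a column with the same vertices of `S`. If `S` contains `(a, b)` and
`(c, d)` with `a ≠ c`, `b ≠ d` but not `(a, d)`, the class of `(a, d)` lies in `{(a, d), (c, b)}`;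
hence when all classes have at least three elements, `S` is a rectangle `A × B`. The classes of a
rectangle are `{a} × Bᶜ`, `Aᶜ × {b}` and `Aᶜ × Bᶜ`, of sizes `n - |B|`, `n - |A|` and their
product (for a single vertex: its `2n - 2` neighbours and the rest), and comparing these sizes
gives every bound; columns `A × {j}` attain them.
-/

open SimpleGraph

/-- Two vertices have the same distances to every vertex of `S`. -/
def sameDists {V : Type*} (G : SimpleGraph V) (S : Set V) (x y : V) : Prop :=
  ∀ z ∈ S, G.dist x z = G.dist y z

/-- The equivalence class (outside `S`) of `x` under the equal-distance relation `R_S`. -/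
def cls {V : Type*} (G : SimpleGraph V) (S : Set V) (x : V) : Set V :=
  {y | y ∉ S ∧ sameDists G S x y}

/-- `S` is a `k`-antiresolving set: `S` is nonempty, does not cover `V`, and the minimum
size of an equivalence class of `R_S` on `V ∖ S` equals `k`. -/
def IsKARS {V : Type*} (G : SimpleGraph V) (k : ℕ) (S : Set V) : Prop :=
  S.Nonempty ∧ Sᶜ.Nonempty ∧
    (∀ x ∉ S, k ≤ (cls G S x).ncard) ∧ ∃ x ∉ S, (cls G S x).ncard = k

/-- The `k`-metric antidimension: the smallest cardinality of a `k`-antiresolving set,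
`⊤` (i.e. `+∞`) if none exists. -/
noncomputable def adim {V : Type*} (G : SimpleGraph V) (k : ℕ) : ℕ∞ :=
  sInf ((fun S => (S.ncard : ℕ∞)) '' {S : Set V | IsKARS G k S})

open Set

section DiameterTwo

variable {V : Type*} {G : SimpleGraph V}

lemma dist_eq_ite_adj_of_ediam_le_two [DecidableRel G.Adj] (hG : G.ediam ≤ 2) {u v : V}
    (huv : u ≠ v) : G.dist u v = if G.Adj u v then 1 else 2 := by
  have hle : G.edist u v ≤ 2 := edist_le_ediam.trans hG
  have hreach : G.Reachable u v :=
    reachable_of_edist_ne_top (ne_top_of_le_ne_top (by decide) hle)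
  have hdist : G.dist u v ≤ 2 := by exact_mod_cast hreach.coe_dist_eq_edist ▸ hle
  split_ifs with hadj
  · exact dist_eq_one_iff_adj.mpr hadj
  · have := hreach.one_lt_dist_of_ne_of_not_adj huv hadj
    omega

lemma sameDists_iff_of_ediam_le_two (hG : G.ediam ≤ 2) {S : Set V} {x y : V} (hx : x ∉ S)
    (hy : y ∉ S) : sameDists G S x y ↔ ∀ z ∈ S, (G.Adj x z ↔ G.Adj y z) := by
  classical
  refine forall₂_congr fun z hz => ?_
  rw [dist_eq_ite_adj_of_ediam_le_two hG (ne_of_mem_of_not_mem hz hx).symm,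
    dist_eq_ite_adj_of_ediam_le_two hG (ne_of_mem_of_not_mem hz hy).symm]
  split_ifs <;> simp_all

end DiameterTwo

section Antidimension

variable {V : Type*} {G : SimpleGraph V} {k : ℕ}

lemma adim_eq_ncard {S : Set V} (hS : IsKARS G k S)
    (hmin : ∀ T, IsKARS G k T → S.ncard ≤ T.ncard) : adim G k = S.ncard :=
  le_antisymm (sInf_le ⟨S, hS, rfl⟩) <| le_sInf <| by
    rintro _ ⟨T, hT, rfl⟩
    exact Nat.cast_le.mpr (hmin T hT)

lemma adim_eq_top (h : ∀ S, ¬IsKARS G k S) : adim G k = ⊤ := by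
  rw [adim, sInf_eq_top]
  rintro _ ⟨S, hS, rfl⟩
  exact absurd hS (h S)

end Antidimension

section RookGraph

variable {α β : Type*}

abbrev rookGraph (α β : Type*) : SimpleGraph (α × β) :=
  (⊤ : SimpleGraph α) □ (⊤ : SimpleGraph β)

lemma ediam_rookGraph_le_two : (rookGraph α β).ediam ≤ 2 := by
  classical
  refine ediam_le_iff.mpr fun x y => ?_
  rw [edist_boxProd, edist_top, edist_top]
  split_ifs <;> norm_num

lemma rookGraph_adj_iff_of_ne {x z : α × β} (h : x ≠ z) :
    (rookGraph α β).Adj x z ↔ x.1 = z.1 ∨ x.2 = z.2 := by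
  rw [boxProd_adj, top_adj, top_adj]
  have : ¬(x.1 = z.1 ∧ x.2 = z.2) := fun h' => h (Prod.ext h'.1 h'.2)
  tauto

lemma cls_rookGraph {S : Set (α × β)} {x : α × β} (hx : x ∉ S) :
    cls (rookGraph α β) S x =
      {y | y ∉ S ∧ ∀ z ∈ S, (x.1 = z.1 ∨ x.2 = z.2 ↔ y.1 = z.1 ∨ y.2 = z.2)} := by
  ext y
  refine and_congr_right fun hy => ?_
  rw [sameDists_iff_of_ediam_le_two ediam_rookGraph_le_two hx hy]
  refine forall₂_congr fun z hz => ?_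
  rw [rookGraph_adj_iff_of_ne (ne_of_mem_of_not_mem hz hx).symm,
    rookGraph_adj_iff_of_ne (ne_of_mem_of_not_mem hz hy).symm]

lemma cls_rookGraph_swap {S : Set (α × β)} {x : α × β} (hx : x ∉ S) :
    cls (rookGraph β α) (Prod.swap ⁻¹' S) x.swap =
      Prod.swap ⁻¹' cls (rookGraph α β) S x := by
  rw [cls_rookGraph hx, cls_rookGraph (by simpa using hx)]
  ext y
  simp only [mem_ofPred_eq, mem_preimage, Prod.fst_swap, Prod.snd_swap]
  refine and_congr_right fun _ => ⟨fun h z hz => ?_, fun h z hz => ?_⟩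
  · simpa [or_comm] using h z.swap (by simpa using hz)
  · simpa [or_comm] using h z.swap hz

end RookGraph

section RookClasses

variable {α β : Type*} {A : Set α} {B : Set β} {a : α} {b : β}

lemma cls_rookGraph_prod_of_mem_of_notMem (ha : a ∈ A) (hb : b ∉ B) (hB : B.Nonempty)
    (hAB : A.Nontrivial ∨ B.Nontrivial) :
    cls (rookGraph α β) (A ×ˢ B) (a, b) = {a} ×ˢ Bᶜ := by
  rw [cls_rookGraph fun h => hb h.2]
  ext ⟨c, d⟩
  simp only [mem_ofPred_eq, mem_prod, mem_singleton_iff, mem_compl_iff, Prod.forall]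
  constructor
  · rintro ⟨hcd, h⟩
    obtain ⟨b₀, hb₀⟩ := hB
    have hca : c = a := by
      by_contra hca
      have hd : d = b₀ := ((h a b₀ ⟨ha, hb₀⟩).mp (Or.inl rfl)).resolve_left hca
      rcases hAB with hA | ⟨b₁, hb₁, b₂, hb₂, hb₁₂⟩
      · obtain ⟨a', ha', ha'a⟩ := hA.exists_ne a
        have := (h a' b₀ ⟨ha', hb₀⟩).mpr (Or.inr hd)
        exact this.elim (fun h' => ha'a h'.symm) fun h' => hb (h' ▸ hb₀)
      · have h₁ := ((h a b₁ ⟨ha, hb₁⟩).mp (Or.inl rfl)).resolve_left hca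
        have h₂ := ((h a b₂ ⟨ha, hb₂⟩).mp (Or.inl rfl)).resolve_left hca
        exact hb₁₂ (h₁.symm.trans h₂)
    exact ⟨hca, fun hd => hcd ⟨hca ▸ ha, hd⟩⟩
  · rintro ⟨rfl, hd⟩
    refine ⟨fun h => hd h.2, fun a' b' h => ?_⟩
    have hbb' : b ≠ b' := fun e => hb (e ▸ h.2)
    have hdb' : d ≠ b' := fun e => hd (e ▸ h.2)
    simp [hbb', hdb']

lemma cls_rookGraph_prod_of_notMem_of_mem (ha : a ∉ A) (hb : b ∈ B) (hA : A.Nonempty)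
    (hAB : A.Nontrivial ∨ B.Nontrivial) :
    cls (rookGraph α β) (A ×ˢ B) (a, b) = Aᶜ ×ˢ {b} := by
  have h := cls_rookGraph_swap (S := B ×ˢ A) (x := (b, a)) fun h => ha h.2
  rwa [preimage_swap_prod, cls_rookGraph_prod_of_mem_of_notMem hb ha hA hAB.symm,
    preimage_swap_prod] at h

lemma cls_rookGraph_prod_of_notMem_of_notMem (ha : a ∉ A) (hb : b ∉ B) (hA : A.Nonempty)
    (hB : B.Nonempty) : cls (rookGraph α β) (A ×ˢ B) (a, b) = Aᶜ ×ˢ Bᶜ := by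
  rw [cls_rookGraph fun h => hb h.2]
  obtain ⟨a₀, ha₀⟩ := hA
  obtain ⟨b₀, hb₀⟩ := hB
  ext ⟨c, d⟩
  simp only [mem_ofPred_eq, mem_prod, mem_compl_iff, Prod.forall]
  constructor
  · rintro ⟨-, h⟩
    have hab : ∀ a' b', a' ∈ A ∧ b' ∈ B → ¬(a = a' ∨ b = b') := by
      rintro a' b' ⟨ha', hb'⟩ (e | e)
      exacts [ha (e ▸ ha'), hb (e ▸ hb')]
    exact ⟨fun hc => hab c b₀ ⟨hc, hb₀⟩ ((h c b₀ ⟨hc, hb₀⟩).mpr (Or.inl rfl)),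
      fun hd => hab a₀ d ⟨ha₀, hd⟩ ((h a₀ d ⟨ha₀, hd⟩).mpr (Or.inr rfl))⟩
  · rintro ⟨hc, hd⟩
    refine ⟨fun h => hc h.1, fun a' b' ⟨ha', hb'⟩ => ?_⟩
    have : a ≠ a' := fun e => ha (e ▸ ha')
    have : b ≠ b' := fun e => hb (e ▸ hb')
    have : c ≠ a' := fun e => hc (e ▸ ha')
    have : d ≠ b' := fun e => hd (e ▸ hb')
    simp_all

lemma cls_rookGraph_singleton_of_eq_or_eq {x z : α × β} (hxz : x ≠ z)
    (h : x.1 = z.1 ∨ x.2 = z.2) :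
    cls (rookGraph α β) {z} x = {z.1} ×ˢ {z.2}ᶜ ∪ {z.1}ᶜ ×ˢ {z.2} := by
  rw [cls_rookGraph (S := {z}) hxz]
  ext ⟨c, d⟩
  simp only [mem_ofPred_eq, mem_singleton_iff, forall_eq, iff_true_intro h, true_iff]
  simp only [mem_union, mem_prod, mem_singleton_iff, mem_compl_iff, Prod.ext_iff]
  tauto

lemma ncard_cls_rookGraph_le_two {S : Set (α × β)} {c : α} {d : β} (hab : (a, b) ∈ S)
    (hcd : (c, d) ∈ S) (hac : a ≠ c) (had : (a, d) ∉ S) :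
    (cls (rookGraph α β) S (a, d)).ncard ≤ 2 := by
  have hsub : cls (rookGraph α β) S (a, d) ⊆ {(a, d), (c, b)} := by
    rw [cls_rookGraph had]
    rintro ⟨y₁, y₂⟩ ⟨-, h⟩
    have h₁ := (h _ hab).mp (Or.inl rfl)
    have h₂ := (h _ hcd).mp (Or.inr rfl)
    simp only [mem_insert_iff, mem_singleton_iff, Prod.mk.injEq]
    grind
  exact (ncard_le_ncard hsub (toFinite _)).trans (ncard_insert_le _ _ |>.trans (by simp))

lemma eq_prod_of_three_le_ncard_cls_rookGraph {S : Set (α × β)}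
    (h : ∀ x ∉ S, 3 ≤ (cls (rookGraph α β) S x).ncard) :
    S = (Prod.fst '' S) ×ˢ (Prod.snd '' S) := by
  refine subset_fst_image_prod_snd_image.antisymm ?_
  rintro ⟨a, d⟩ ⟨⟨⟨a, b⟩, hab, rfl⟩, ⟨⟨c, d⟩, hcd, rfl⟩⟩
  by_contra had
  have hac : a ≠ c := fun e => had (e ▸ hcd)
  have := ncard_cls_rookGraph_le_two hab hcd hac had
  have := h (a, d) had
  omega

end RookClasses

section RookCounting

variable {α β : Type*} {A : Set α} {B : Set β} {a : α} {b : β} {k : ℕ}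

lemma ncard_cls_rookGraph_prod_of_mem_of_notMem [Finite β] (ha : a ∈ A) (hb : b ∉ B)
    (hB : B.Nonempty) (hAB : A.Nontrivial ∨ B.Nontrivial) :
    (cls (rookGraph α β) (A ×ˢ B) (a, b)).ncard = Nat.card β - B.ncard := by
  rw [cls_rookGraph_prod_of_mem_of_notMem ha hb hB hAB, ncard_prod, ncard_singleton, one_mul,
    ncard_compl]

lemma ncard_cls_rookGraph_prod_of_notMem_of_mem [Finite α] (ha : a ∉ A) (hb : b ∈ B)
    (hA : A.Nonempty) (hAB : A.Nontrivial ∨ B.Nontrivial) :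
    (cls (rookGraph α β) (A ×ˢ B) (a, b)).ncard = Nat.card α - A.ncard := by
  rw [cls_rookGraph_prod_of_notMem_of_mem ha hb hA hAB, ncard_prod, ncard_singleton, mul_one,
    ncard_compl]

lemma ncard_cls_rookGraph_prod_of_notMem_of_notMem [Finite α] [Finite β] (ha : a ∉ A)
    (hb : b ∉ B) (hA : A.Nonempty) (hB : B.Nonempty) :
    (cls (rookGraph α β) (A ×ˢ B) (a, b)).ncard =
      (Nat.card α - A.ncard) * (Nat.card β - B.ncard) := by
  rw [cls_rookGraph_prod_of_notMem_of_notMem ha hb hA hB, ncard_prod, ncard_compl, ncard_compl]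

lemma le_of_isKARS_rookGraph_singleton [Finite α] [Finite β] (hα : 3 ≤ Nat.card α)
    (hβ : 3 ≤ Nat.card β) {z : α × β} (hz : IsKARS (rookGraph α β) k {z}) :
    Nat.card α - 1 + (Nat.card β - 1) ≤ k := by
  obtain ⟨⟨a, b⟩, hx, rfl⟩ := hz.2.2.2
  obtain ⟨c, d⟩ := z
  by_cases h : a = c ∨ b = d
  · rw [cls_rookGraph_singleton_of_eq_or_eq hx h,
      ncard_union_eq (disjoint_prod.mpr (Or.inl disjoint_compl_right)), ncard_prod, ncard_prod,
      ncard_compl, ncard_compl, ncard_singleton, ncard_singleton]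
    omega
  · push Not at h
    rw [← singleton_prod_singleton (a := c) (b := d),
      ncard_cls_rookGraph_prod_of_notMem_of_notMem (A := {c}) (B := {d}) h.1 h.2
      (singleton_nonempty c) (singleton_nonempty d), ncard_singleton, ncard_singleton]
    generalize hu : Nat.card α - 1 = u
    generalize hv : Nat.card β - 1 = v
    have : 2 ≤ u := by omega
    have : 2 ≤ v := by omega
    nlinarith

lemma add_ncard_left_le_of_isKARS_rookGraph_prod [Finite α]
    (hS : IsKARS (rookGraph α β) k (A ×ˢ B)) (hA : A.Nonempty) (hB : B.Nonempty)
    (hAB : A.Nontrivial ∨ B.Nontrivial) (ha : a ∉ A) :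
    k + A.ncard ≤ Nat.card α := by
  obtain ⟨b, hb⟩ := hB
  have := hS.2.2.1 (a, b) fun h => ha h.1
  rw [ncard_cls_rookGraph_prod_of_notMem_of_mem ha hb hA hAB] at this
  have := ncard_le_card A
  omega

lemma add_ncard_right_le_of_isKARS_rookGraph_prod [Finite β]
    (hS : IsKARS (rookGraph α β) k (A ×ˢ B)) (hA : A.Nonempty) (hB : B.Nonempty)
    (hAB : A.Nontrivial ∨ B.Nontrivial) (hb : b ∉ B) :
    k + B.ncard ≤ Nat.card β := by
  obtain ⟨a, ha⟩ := hA
  have := hS.2.2.1 (a, b) fun h => hb h.2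
  rw [ncard_cls_rookGraph_prod_of_mem_of_notMem ha hb hB hAB] at this
  have := ncard_le_card B
  omega

lemma isKARS_rookGraph_prod_cases [Finite α] [Finite β] (hk : 3 ≤ k) (hA : A.Nonempty)
    (hB : B.Nonempty) (hAB : A.Nontrivial ∨ B.Nontrivial)
    (hS : IsKARS (rookGraph α β) k (A ×ˢ B)) :
    (k + B.ncard = Nat.card β ∧ (A.ncard = Nat.card α ∨ k + A.ncard ≤ Nat.card α)) ∨
      (k + A.ncard = Nat.card α ∧ (B.ncard = Nat.card β ∨ k + B.ncard ≤ Nat.card β)) := by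
  have hleft : A.ncard = Nat.card α ∨ k + A.ncard ≤ Nat.card α :=
    (eq_or_ne A univ).imp (fun (h : A = univ) => h ▸ ncard_univ α) fun h =>
      let ⟨_, ha⟩ := (ne_univ_iff_exists_notMem A).mp h
      add_ncard_left_le_of_isKARS_rookGraph_prod hS hA hB hAB ha
  have hright : B.ncard = Nat.card β ∨ k + B.ncard ≤ Nat.card β :=
    (eq_or_ne B univ).imp (fun (h : B = univ) => h ▸ ncard_univ β) fun h =>
      let ⟨_, hb⟩ := (ne_univ_iff_exists_notMem B).mp h
      add_ncard_right_le_of_isKARS_rookGraph_prod hS hA hB hAB hb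
  obtain ⟨⟨a, b⟩, hx, hxk⟩ := hS.2.2.2
  by_cases ha : a ∈ A
  · have hb : b ∉ B := fun hb => hx ⟨ha, hb⟩
    rw [ncard_cls_rookGraph_prod_of_mem_of_notMem ha hb hB hAB] at hxk
    exact Or.inl ⟨by omega, hleft⟩
  by_cases hb : b ∈ B
  · rw [ncard_cls_rookGraph_prod_of_notMem_of_mem ha hb hA hAB] at hxk
    exact Or.inr ⟨by omega, hright⟩
  -- `Aᶜ ×ˢ Bᶜ` is never a smallest class: its size is a product of two class sizes `≥ k ≥ 3`
  rw [ncard_cls_rookGraph_prod_of_notMem_of_notMem ha hb hA hB] at hxk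
  have h₁ := add_ncard_left_le_of_isKARS_rookGraph_prod hS hA hB hAB ha
  have h₂ := add_ncard_right_le_of_isKARS_rookGraph_prod hS hA hB hAB hb
  generalize hu : Nat.card α - A.ncard = u at hxk
  generalize hv : Nat.card β - B.ncard = v at hxk
  have : k ≤ u := by omega
  have : k ≤ v := by omega
  nlinarith

end RookCounting

section SquareRookGraph

variable {α : Type*} [Finite α] {k : ℕ}

lemma isKARS_rookGraph_cases (hn : 3 ≤ Nat.card α) (hk : 3 ≤ k) {S : Set (α × α)}
    (hS : IsKARS (rookGraph α α) k S) :
    2 * Nat.card α - 2 ≤ k ∨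
      (k < Nat.card α ∧ Nat.card α ≤ k + S.ncard ∧
        (k + 1 = Nat.card α → Nat.card α ≤ S.ncard)) := by
  have hprod := eq_prod_of_three_le_ncard_cls_rookGraph fun x hx => hk.trans (hS.2.2.1 x hx)
  have hA : (Prod.fst '' S).Nonempty := hS.1.image _
  have hB : (Prod.snd '' S).Nonempty := hS.1.image _
  set A := Prod.fst '' S
  set B := Prod.snd '' S
  rw [hprod] at hS ⊢
  by_cases hAB : A.Nontrivial ∨ B.Nontrivial
  · right
    have hAB' : 1 < A.ncard ∨ 1 < B.ncard :=
      hAB.imp one_lt_ncard_iff_nontrivial.mpr one_lt_ncard_iff_nontrivial.mpr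
    have hp : 0 < A.ncard := (ncard_pos).mpr hA
    have hq : 0 < B.ncard := (ncard_pos).mpr hB
    have hpq : A.ncard ≤ A.ncard * B.ncard := Nat.le_mul_of_pos_right _ hq
    have hqp : B.ncard ≤ A.ncard * B.ncard := Nat.le_mul_of_pos_left _ hp
    rw [ncard_prod]
    rcases isKARS_rookGraph_prod_cases hk hA hB hAB hS with ⟨h₁, h₂⟩ | ⟨h₁, h₂⟩ <;>
      omega
  · left
    rw [not_or] at hAB
    obtain ⟨a, hA⟩ := hA.exists_eq_singleton_or_nontrivial.resolve_right hAB.1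
    obtain ⟨b, hB⟩ := hB.exists_eq_singleton_or_nontrivial.resolve_right hAB.2
    rw [hA, hB, singleton_prod_singleton] at hS
    have := le_of_isKARS_rookGraph_singleton hn hn hS
    omega

lemma isKARS_rookGraph_prod_singleton {A : Set α} (j : α) (h2 : 2 ≤ A.ncard)
    (hA : A.ncard < Nat.card α) :
    IsKARS (rookGraph α α) (Nat.card α - A.ncard) (A ×ˢ {j}) := by
  have hA₀ : A.Nonempty := nonempty_of_ncard_ne_zero (by omega)
  have hAB : A.Nontrivial ∨ ({j} : Set α).Nontrivial :=
    Or.inl (one_lt_ncard_iff_nontrivial.mp h2)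
  obtain ⟨a', ha'⟩ : Aᶜ.Nonempty := nonempty_of_ncard_ne_zero (by rw [ncard_compl]; omega)
  have hwitness := ncard_cls_rookGraph_prod_of_notMem_of_mem ha' (mem_singleton j) hA₀ hAB
  refine ⟨hA₀.prod (singleton_nonempty j), ⟨(a', j), fun h => ha' h.1⟩, ?_,
    (a', j), fun h => ha' h.1, hwitness⟩
  rintro ⟨a, b⟩ hx
  by_cases ha : a ∈ A
  · have hb : b ∉ ({j} : Set α) := fun hb => hx ⟨ha, hb⟩
    rw [ncard_cls_rookGraph_prod_of_mem_of_notMem ha hb (singleton_nonempty j) hAB,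
      ncard_singleton]
    omega
  by_cases hb : b ∈ ({j} : Set α)
  · rw [ncard_cls_rookGraph_prod_of_notMem_of_mem ha hb hA₀ hAB]
  · rw [ncard_cls_rookGraph_prod_of_notMem_of_notMem ha hb hA₀ (singleton_nonempty j),
      ncard_singleton]
    exact Nat.le_mul_of_pos_right _ (by omega)

lemma isKARS_rookGraph_univ_prod_singleton (hn : 2 ≤ Nat.card α) (j : α) :
    IsKARS (rookGraph α α) (Nat.card α - 1) (univ ×ˢ {j}) := by
  have : Nontrivial α := Finite.one_lt_card_iff_nontrivial.mp hn
  have hAB : (univ : Set α).Nontrivial ∨ ({j} : Set α).Nontrivial := Or.inl nontrivial_univ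
  have hcls : ∀ x ∉ (univ : Set α) ×ˢ {j},
      (cls (rookGraph α α) (univ ×ˢ {j}) x).ncard = Nat.card α - 1 := fun x hx => by
    rw [ncard_cls_rookGraph_prod_of_mem_of_notMem (mem_univ x.1) (fun h => hx ⟨mem_univ _, h⟩)
      (singleton_nonempty j) hAB, ncard_singleton]
  obtain ⟨j', hj'⟩ := exists_ne j
  have hx : (j, j') ∉ (univ : Set α) ×ˢ {j} := fun h => hj' h.2
  exact ⟨⟨(j, j), mem_univ j, rfl⟩, ⟨_, hx⟩, fun x hx => (hcls x hx).ge, _, hx,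
    hcls _ hx⟩

lemma isKARS_rookGraph_of_forall_snd_eq {X : Set (α × α)} {j : α} (hX : ∀ p ∈ X, p.2 = j)
    (h2 : 2 ≤ X.ncard) (hlt : X.ncard < Nat.card α) :
    IsKARS (rookGraph α α) (Nat.card α - X.ncard) X := by
  have hXeq : (Prod.fst '' X) ×ˢ {j} = X := by
    refine (prod_subset_iff.mpr ?_).antisymm fun p hp => ⟨mem_image_of_mem _ hp, hX p hp⟩
    rintro _ ⟨p, hp, rfl⟩ _ rfl
    rwa [← hX p hp]
  have hcard : (Prod.fst '' X).ncard = X.ncard := by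
    rw [← hXeq, ncard_prod, ncard_singleton, mul_one, hXeq]
  have hS := isKARS_rookGraph_prod_singleton j (hcard ▸ h2) (hcard ▸ hlt)
  rwa [hcard, hXeq] at hS

lemma adim_rookGraph_eq_card_sub (hk : 3 ≤ k) (hkn : k + 2 ≤ Nat.card α) :
    adim (rookGraph α α) k = (Nat.card α - k : ℕ) := by
  obtain ⟨j⟩ : Nonempty α := Nat.card_pos_iff.mp (by omega) |>.1
  obtain ⟨A, -, hA⟩ := exists_subset_card_eq (s := (univ : Set α)) (n := Nat.card α - k)
    (by rw [ncard_univ]; omega)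
  have hS := isKARS_rookGraph_prod_singleton (A := A) j (by omega) (by omega)
  rw [hA, show Nat.card α - (Nat.card α - k) = k by omega] at hS
  have hcard : (A ×ˢ {j}).ncard = Nat.card α - k := by
    rw [ncard_prod, ncard_singleton, mul_one, hA]
  refine (adim_eq_ncard hS fun T hT => hcard ▸ ?_).trans (by rw [hcard])
  rcases isKARS_rookGraph_cases (by omega) hk hT with h | h <;> omega

lemma adim_rookGraph_card_sub_one (hn : 4 ≤ Nat.card α) :
    adim (rookGraph α α) (Nat.card α - 1) = Nat.card α := by
  obtain ⟨j⟩ : Nonempty α := Nat.card_pos_iff.mp (by omega) |>.1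
  have hcard : ((univ : Set α) ×ˢ {j}).ncard = Nat.card α := by
    rw [ncard_prod, ncard_singleton, mul_one, ncard_univ]
  refine (adim_eq_ncard (isKARS_rookGraph_univ_prod_singleton (by omega) j) fun T hT =>
    hcard ▸ ?_).trans (by rw [hcard])
  rcases isKARS_rookGraph_cases (by omega) (by omega) hT with h | h <;> omega

lemma not_isKARS_rookGraph (hn : 3 ≤ Nat.card α) (hk : Nat.card α ≤ k)
    (hk' : k ≤ 2 * Nat.card α - 3) (S : Set (α × α)) : ¬IsKARS (rookGraph α α) k S := by
  intro hS
  rcases isKARS_rookGraph_cases hn (by omega) hS with h | h <;> omega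

end SquareRookGraph

/-- For `r ≥ 5`: `adim_k(K_r □ K_r) = r − k` for `3 ≤ k ≤ r−2`;
`adim_{r−1}(K_r □ K_r) = r`; no `k`-ARS exists for `r ≤ k ≤ 2r−3` (so `adim_k = +∞`);
and any set `X` of `t` vertices contained in a single column `V(K_r) × {v_j}` with
`2 ≤ t ≤ r−1` is an `(r−t)`-ARS. -/
theorem stmt19 (r : ℕ) (hr : 5 ≤ r) :
    (∀ k, 3 ≤ k → k ≤ r - 2 →
      adim ((⊤ : SimpleGraph (Fin r)).boxProd (⊤ : SimpleGraph (Fin r))) k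
        = ((r - k : ℕ) : ℕ∞)) ∧
    adim ((⊤ : SimpleGraph (Fin r)).boxProd (⊤ : SimpleGraph (Fin r))) (r - 1)
      = ((r : ℕ) : ℕ∞) ∧
    (∀ k, r ≤ k → k ≤ 2 * r - 3 →
      (¬∃ S : Set (Fin r × Fin r),
        IsKARS ((⊤ : SimpleGraph (Fin r)).boxProd (⊤ : SimpleGraph (Fin r))) k S) ∧
      adim ((⊤ : SimpleGraph (Fin r)).boxProd (⊤ : SimpleGraph (Fin r))) k = ⊤) ∧
    (∀ (j : Fin r) (X : Set (Fin r × Fin r)), (∀ p ∈ X, p.2 = j) →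
      2 ≤ X.ncard → X.ncard ≤ r - 1 →
      IsKARS ((⊤ : SimpleGraph (Fin r)).boxProd (⊤ : SimpleGraph (Fin r)))
        (r - X.ncard) X) := by
  have hcard : Nat.card (Fin r) = r := Nat.card_fin r
  refine ⟨fun k hk hkr => ?_, ?_, fun k hk hkr => ⟨?_, ?_⟩, fun j X hX h2 hlt => ?_⟩
  · simpa only [hcard] using adim_rookGraph_eq_card_sub (α := Fin r) hk (by omega)
  · simpa only [hcard] using adim_rookGraph_card_sub_one (α := Fin r) (by omega)
  · exact fun ⟨S, hS⟩ =>
      not_isKARS_rookGraph (α := Fin r) (by omega) (by omega) (by omega) S hS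
  · exact adim_eq_top (not_isKARS_rookGraph (by omega) (by omega) (by omega))
  · simpa only [hcard] using isKARS_rookGraph_of_forall_snd_eq hX h2 (by omega)
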